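/- arXiv:1805.11345 — 2 statements merged into one kernel-verified Lean document; each statement's English description precedes it below -/
import Mathlib

section
/- Let M be a type with a transitive relation ≪ and a function d : M × M → ℝ satisfying: d(p,q) > 0 if p ≪ q, and the reverse triangle inequality d(p,r) ≥ d(p,q) + d(q,r) whenever p ≪ q ≪ r. Let φ : M → M be a bijection preserving both ≪ and d (a motion), with p ≪ φ(p) for all p (a P-motion). Suppose p satisfies d(p, φ(p)) = sup { d(q, φ(q)) : q ∈ S }, where S is a φ-invariant set containing p and containing every q with p ≪ q ≪ φ(p). Then for every q ∈ S with p ≪ q ≪ φ(p) and d(p, φ(p)) = d(p,q) + d(q, φ(p)), one has d(q, φ(q)) = d(p, φ(p)). -/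
/-- Abstract Proposition 4.4. If a P-motion `φ` has its displacement
maximized at `p` over a suitable set `S`, then every point `q` on a "maximal
segment" from `p` to `φ p` has the same displacement as `p`. -/
theorem displacement_constant_on_segment {M : Type*} (ll : M → M → Prop)
    (htrans : Transitive ll)
    (d : M × M → ℝ)
    (hpos : ∀ p q : M, ll p q → 0 < d (p, q))
    (hrev : ∀ p q r : M, ll p q → ll q r → d (p, q) + d (q, r) ≤ d (p, r))
    (φ : M → M) (hbij : Function.Bijective φ)
    (hmot_ll : ∀ p q : M, ll p q → ll (φ p) (φ q))
    (hmot_d : ∀ p q : M, d (φ p, φ q) = d (p, q))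
    (hP : ∀ p : M, ll p (φ p))
    (p : M) (S : Set M)
    (hpS : p ∈ S)
    (hSinv : ∀ q ∈ S, φ q ∈ S)
    (hSmid : ∀ q : M, ll p q → ll q (φ p) → q ∈ S)
    (hsup : d (p, φ p) = sSup ((fun q => d (q, φ q)) '' S)) :
    ∀ q ∈ S, ll p q → ll q (φ p) →
      d (p, φ p) = d (p, q) + d (q, φ p) → d (q, φ q) = d (p, φ p) := by
  intro q hqS hpq hqφp heq
  -- lower bound: d(q, φq) ≥ d(q, φp) + d(φp, φq) = d(q, φp) + d(p, q) = d(p, φp)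
  have hφpφq : ll (φ p) (φ q) := hmot_ll p q hpq
  have hlow : d (p, φ p) ≤ d (q, φ q) := by
    have h1 := hrev q (φ p) (φ q) hqφp hφpφq
    rw [hmot_d p q] at h1
    linarith [h1, heq]
  -- upper bound via the sup
  have hbdd : BddAbove ((fun q => d (q, φ q)) '' S) := by
    by_contra h
    have := Real.sSup_of_not_bddAbove h
    rw [this] at hsup
    exact absurd hsup (ne_of_gt (hpos p (φ p) (hP p)))
  have hhigh : d (q, φ q) ≤ d (p, φ p) := by
    rw [hsup]
    exact le_csSup hbdd ⟨q, hqS, rfl⟩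
  linarith
end

section
/- Let M be a type with a transitive relation ≪ and d : M × M → ℝ≥0 with reverse triangle inequality (d(p,r) ≥ d(p,q) + d(q,r) whenever p ≪ q ≪ r) and d(x,y) = 0 unless x ≪ y. Let φ : M → M be a P-motion (bijection preserving ≪ and d, with p ≪ φ p for all p). Let γ : ℤ → M be a φ-invariant orbit, i.e. φ(γ(i)) = γ(i+1), with γ(i) ≪ γ(j) for i < j and d(γ(i), γ(j)) = (j−i)·a where a = d(γ(0), γ(1)) > 0. Suppose q is a point such that there exist integers m₁ < m₂ with γ(m₁) ≪ q ≪ γ(m₂), q ≪ φ(q), and d(γ(m₁), q) + d(q, γ(m₂)) < C for some finite C. Then d(q, φ(q)) ≤ a. -/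
/-- Abstract Proposition 4.1. The displacement of a P-motion at a
point chronologically sandwiched by an axis `γ` is at most the translation
length `a` along the axis. -/
theorem displacement_le_translation_length {M : Type*} (ll : M → M → Prop)
    (htrans : Transitive ll)
    (d : M × M → ℝ)
    (hnonneg : ∀ p q : M, 0 ≤ d (p, q))
    (hrev : ∀ p q r : M, ll p q → ll q r → d (p, q) + d (q, r) ≤ d (p, r))
    (hvanish : ∀ p q : M, ¬ ll p q → d (p, q) = 0)
    (φ : M → M) (hbij : Function.Bijective φ)
    (hmot_ll : ∀ p q : M, ll p q → ll (φ p) (φ q))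
    (hmot_d : ∀ p q : M, d (φ p, φ q) = d (p, q))
    (hP : ∀ p : M, ll p (φ p))
    (γ : ℤ → M) (hinv : ∀ i : ℤ, φ (γ i) = γ (i + 1))
    (hchron : ∀ i j : ℤ, i < j → ll (γ i) (γ j))
    (a : ℝ) (ha : a = d (γ 0, γ 1)) (hapos : 0 < a)
    (hadd : ∀ i j : ℤ, i ≤ j → d (γ i, γ j) = ((j - i : ℤ) : ℝ) * a)
    (q : M) (m₁ m₂ : ℤ) (hm : m₁ < m₂)
    (h₁ : ll (γ m₁) q) (h₂ : ll q (γ m₂))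
    (C : ℝ) (hC : d (γ m₁, q) + d (q, γ m₂) < C) :
    d (q, φ q) ≤ a := by
  set D := d (q, φ q) with hD
  -- iterated facts
  have hiter_d : ∀ (k : ℕ) (p r : M), d (φ^[k] p, φ^[k] r) = d (p, r) := by
    intro k
    induction k with
    | zero => intro p r; simp
    | succ k ih =>
      intro p r
      rw [Function.iterate_succ_apply', Function.iterate_succ_apply', hmot_d]
      exact ih p r
  have hiter_ll : ∀ (k : ℕ) (p r : M), ll p r → ll (φ^[k] p) (φ^[k] r) := by
    intro k
    induction k with
    | zero => intro p r h; simpa using h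
    | succ k ih =>
      intro p r h
      rw [Function.iterate_succ_apply', Function.iterate_succ_apply']
      exact hmot_ll _ _ (ih p r h)
  have hiter_γ : ∀ (k : ℕ) (i : ℤ), φ^[k] (γ i) = γ (i + k) := by
    intro k
    induction k with
    | zero => intro i; simp
    | succ k ih =>
      intro i
      rw [Function.iterate_succ_apply', ih, hinv]
      congr 1
      push_cast
      ring
  -- main induction: d(γ m₁, φ^k q) ≥ k D and γ m₁ ≪ φ^k q
  have key : ∀ k : ℕ, ll (γ m₁) (φ^[k] q) ∧ (k : ℝ) * D ≤ d (γ m₁, φ^[k] q) := by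
    intro k
    induction k with
    | zero => exact ⟨by simpa using h₁, by simpa using hnonneg (γ m₁) q⟩
    | succ k ih =>
      obtain ⟨ih1, ih2⟩ := ih
      have hstep : ll (φ^[k] q) (φ^[k+1] q) := by
        rw [Function.iterate_succ_apply']
        exact hP _
      refine ⟨htrans ih1 hstep, ?_⟩
      have := hrev (γ m₁) (φ^[k] q) (φ^[k+1] q) ih1 hstep
      have hdd : d (φ^[k] q, φ^[k+1] q) = D := by
        rw [Function.iterate_succ_apply]
        simpa [hD] using hiter_d k q (φ q)
      push_cast
      nlinarith [ih2, hdd, this]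
  -- for each k ≥ 1, k D ≤ (m₂ - m₁ + k) a
  have bound : ∀ k : ℕ, (k : ℝ) * D ≤ ((m₂ - m₁ : ℤ) + (k : ℝ)) * a := by
    intro k
    have hq2 : ll (φ^[k] q) (γ (m₂ + k)) := by
      have := hiter_ll k q (γ m₂) h₂
      rwa [hiter_γ k m₂] at this
    rcases key k with ⟨hk1, hk2⟩
    have htot : d (γ m₁, φ^[k] q) + d (φ^[k] q, γ (m₂ + k)) ≤ d (γ m₁, γ (m₂ + k)) :=
      hrev _ _ _ hk1 hq2
    have hval : d (γ m₁, γ (m₂ + k)) = ((m₂ + (k : ℤ) - m₁ : ℤ) : ℝ) * a := by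
      apply hadd
      omega
    have hnn := hnonneg (φ^[k] q) (γ (m₂ + k))
    rw [hval] at htot
    push_cast at htot ⊢
    nlinarith
  -- conclude
  by_contra hcon
  push_neg at hcon
  have hpos : 0 < D - a := by linarith
  obtain ⟨k, hk⟩ := exists_nat_gt (((m₂ - m₁ : ℤ) : ℝ) * a / (D - a))
  have hb := bound k
  have h1 : ((m₂ - m₁ : ℤ) : ℝ) * a / (D - a) < k := hk
  have h2 : ((m₂ - m₁ : ℤ) : ℝ) * a < (k : ℝ) * (D - a) := by
    rw [div_lt_iff₀ hpos] at h1
    linarith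
  nlinarith
end
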